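/- arXiv:1312.7077 — 2 statements merged into one kernel-verified Lean document; each statement's English description precedes it below -/
import Mathlib

section
/- Let B be the binary matrix B(w,w') := 1 if c(w,w') > 0 and 0 otherwise, and assume B is not identically zero. Let N_+(w,·) := #{w' : c(w,w') > 0}, N_+(·,w') := #{w : c(w,w') > 0}, and N_+(·,·) := #{(w,w') : c(w,w') > 0}. Then the matrix Z(w,w') := N_+(w,·) · N_+(·,w') / N_+(·,·) globally minimizes gKL(B ‖ u vᵀ) over nonnegative rank-one matrices u vᵀ, and for every context w' with N_+(·,w') > 0, the normalized approximation satisfies Z(w,w') / ∑_u B(u,w') = N_+(w,·) / N_+(·,·) for all w. That is, normalizing the best rank-one gKL approximation of the zeroth-power count matrix by its column sums yields, for every context, the Kneser–Ney continuation distribution P^alt(w) = N_+(w,·)/N_+(·,·), which is independent of the context w'. -/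
set_option maxHeartbeats 1000000

open Finset

/-- One term of the generalized KL divergence, valued in `[0, ∞]`:
a term with `m = 0` contributes `a`, a term with `m > 0` and `a = 0`
contributes `+∞`, and otherwise it is `m·log(m/a) − m + a`. -/
noncomputable def gKLterm (m a : ℝ) : EReal :=
  if m = 0 then (a : EReal)
  else if a = 0 then ⊤
  else ((m * Real.log (m / a) - m + a : ℝ) : EReal)

/-- Generalized KL divergence between (entrywise nonnegative) matrices. -/
noncomputable def gKL {ι κ : Type*} [Fintype ι] [Fintype κ]
    (M A : ι → κ → ℝ) : EReal :=
  ∑ i, ∑ j, gKLterm (M i j) (A i j)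

private lemma coe_fsum {α : Type*} (s : Finset α) (f : α → ℝ) :
    ((∑ a ∈ s, f a : ℝ) : EReal) = ∑ a ∈ s, (f a : EReal) :=
  map_sum (⟨⟨Real.toEReal, EReal.coe_zero⟩, EReal.coe_add⟩ : ℝ →+ EReal) f s

private lemma gKLterm_nonneg {m a : ℝ} (hm : m = 0 ∨ m = 1) (ha : 0 ≤ a) :
    0 ≤ gKLterm m a := by
  unfold gKLterm
  rcases hm with hm | hm
  · rw [if_pos hm]; exact EReal.coe_nonneg.2 ha
  · subst hm
    rw [if_neg one_ne_zero]
    by_cases ha0 : a = 0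
    · rw [if_pos ha0]; exact le_top
    · rw [if_neg ha0]
      have hapos : 0 < a := lt_of_le_of_ne ha (Ne.symm ha0)
      have hlog := Real.log_le_sub_one_of_pos hapos
      have : (0:ℝ) ≤ 1 * Real.log (1 / a) - 1 + a := by
        rw [one_mul, one_div, Real.log_inv]; linarith
      exact EReal.coe_nonneg.2 this

/-- The main minimization inequality, with abstract marginals. -/
private lemma main_ineq {V : Type*} [Fintype V] (c : V × V → ℕ)
    (R C : V → ℕ) (n : ℕ)
    (hR : ∀ w, (R w : ℝ) = ∑ w', if 0 < c (w, w') then (1:ℝ) else 0)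
    (hC : ∀ w', (C w' : ℝ) = ∑ w, if 0 < c (w, w') then (1:ℝ) else 0)
    (hnR : (n : ℝ) = ∑ w, (R w : ℝ))
    (hnC : (n : ℝ) = ∑ w', (C w' : ℝ))
    (hn : 0 < n)
    (u v : V → ℝ) (hu : ∀ w, 0 ≤ u w) (hv : ∀ w', 0 ≤ v w') :
    gKL (fun w w' => if 0 < c (w, w') then (1 : ℝ) else 0)
        (fun w w' => (R w : ℝ) * (C w' : ℝ) / (n : ℝ))
      ≤ gKL (fun w w' => if 0 < c (w, w') then (1 : ℝ) else 0)
          (fun w w' => u w * v w') := by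
  classical
  have hn' : (0:ℝ) < (n:ℝ) := by exact_mod_cast hn
  have hn0 : (n:ℝ) ≠ 0 := hn'.ne'
  -- positivity of the marginals on the support
  have hRpos : ∀ w w', 0 < c (w, w') → (0:ℝ) < (R w : ℝ) := by
    intro w w' h
    rw [hR w]
    have h1 : (1:ℝ) ≤ ∑ x', if 0 < c (w, x') then (1:ℝ) else 0 := by
      have := Finset.single_le_sum (f := fun x' => if 0 < c (w, x') then (1:ℝ) else 0)
        (fun i _ => by positivity) (Finset.mem_univ w')
      simpa [h] using this
    linarith
  have hCpos : ∀ w w', 0 < c (w, w') → (0:ℝ) < (C w' : ℝ) := by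
    intro w w' h
    rw [hC w']
    have h1 : (1:ℝ) ≤ ∑ x, if 0 < c (x, w') then (1:ℝ) else 0 := by
      have := Finset.single_le_sum (f := fun x => if 0 < c (x, w') then (1:ℝ) else 0)
        (fun i _ => by positivity) (Finset.mem_univ w)
      simpa [h] using this
    linarith
  have hRex : ∀ w, (0:ℝ) < (R w : ℝ) → ∃ w', 0 < c (w, w') := by
    intro w hw
    by_contra hcon
    push_neg at hcon
    have : (R w : ℝ) = 0 := by
      rw [hR w]
      refine Finset.sum_eq_zero fun w' _ => ?_
      simp [Nat.le_zero.mp (hcon w')]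
    linarith
  have hCex : ∀ w', (0:ℝ) < (C w' : ℝ) → ∃ w, 0 < c (w, w') := by
    intro w' hw
    by_contra hcon
    push_neg at hcon
    have : (C w' : ℝ) = 0 := by
      rw [hC w']
      refine Finset.sum_eq_zero fun w _ => ?_
      simp [Nat.le_zero.mp (hcon w)]
    linarith
  by_cases hfin : ∀ w w', 0 < c (w, w') → 0 < u w * v w'
  · -- the finite case
    have hu' : ∀ w w', 0 < c (w, w') → 0 < u w := by
      intro w w' h
      rcases (hu w).lt_or_eq with h2 | h2
      · exact h2
      · exfalso; have h1 := hfin w w' h; rw [← h2, zero_mul] at h1; exact lt_irrefl 0 h1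
    have hv' : ∀ w w', 0 < c (w, w') → 0 < v w' := by
      intro w w' h
      rcases (hv w').lt_or_eq with h2 | h2
      · exact h2
      · exfalso; have h1 := hfin w w' h; rw [← h2, mul_zero] at h1; exact lt_irrefl 0 h1
    -- convert both sides to real sums
    have key : ∀ A : V → V → ℝ, (∀ w w', 0 < c (w, w') → A w w' ≠ 0) →
        gKL (fun w w' => if 0 < c (w, w') then (1 : ℝ) else 0) A
          = ((∑ w, ∑ w', (A w w' -
              (if 0 < c (w, w') then 1 + Real.log (A w w') else 0)) : ℝ) : EReal) := by
      intro A hA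
      unfold gKL
      rw [coe_fsum]
      refine Finset.sum_congr rfl fun w _ => ?_
      rw [coe_fsum]
      refine Finset.sum_congr rfl fun w' _ => ?_
      by_cases h : 0 < c (w, w')
      · simp only [h, if_true]
        unfold gKLterm
        rw [if_neg one_ne_zero, if_neg (hA w w' h)]
        congr 1
        rw [one_mul, one_div, Real.log_inv]
        ring
      · simp only [h, if_false]
        unfold gKLterm
        rw [if_pos rfl]
        congr 1
        ring
    have hZne : ∀ w w', 0 < c (w, w') → (R w : ℝ) * (C w' : ℝ) / (n : ℝ) ≠ 0 := by
      intro w w' h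
      have := hRpos w w' h; have := hCpos w w' h
      positivity
    have hUVne : ∀ w w', 0 < c (w, w') → u w * v w' ≠ 0 :=
      fun w w' h => (hfin w w' h).ne'
    rw [key _ hZne, key _ hUVne, EReal.coe_le_coe_iff]
    -- now a purely real inequality
    set S := ∑ w, u w with hS_def
    set T := ∑ w', v w' with hT_def
    have hSpos : 0 < S := by
      obtain ⟨w0, hw0⟩ : ∃ w, (0:ℝ) < (R w : ℝ) := by
        by_contra hcon
        push_neg at hcon
        have : (n:ℝ) ≤ 0 := by
          rw [hnR]; exact Finset.sum_nonpos fun w _ => hcon w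
        linarith
      obtain ⟨w0', hw0'⟩ := hRex w0 hw0
      have h1 : 0 < u w0 := hu' w0 w0' hw0'
      have := Finset.single_le_sum (f := u) (fun i _ => hu i) (Finset.mem_univ w0)
      rw [hS_def]; linarith
    have hTpos : 0 < T := by
      obtain ⟨w0', hw0'⟩ : ∃ w', (0:ℝ) < (C w' : ℝ) := by
        by_contra hcon
        push_neg at hcon
        have : (n:ℝ) ≤ 0 := by
          rw [hnC]; exact Finset.sum_nonpos fun w _ => hcon w
        linarith
      obtain ⟨w0, hw0⟩ := hCex w0' hw0'
      have h1 : 0 < v w0' := hv' w0 w0' hw0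
      have := Finset.single_le_sum (f := v) (fun i _ => hv i) (Finset.mem_univ w0')
      rw [hT_def]; linarith
    -- generic collapsing lemmas
    have hrowsum : ∀ f : V → ℝ,
        (∑ w, ∑ w', if 0 < c (w, w') then f w else 0) = ∑ w, (R w : ℝ) * f w := by
      intro f
      refine Finset.sum_congr rfl fun w _ => ?_
      have hite : ∀ w', (if 0 < c (w, w') then f w else 0)
          = (if 0 < c (w, w') then (1:ℝ) else 0) * f w := by
        intro w'; split_ifs <;> ring
      simp only [hite]
      rw [← Finset.sum_mul, ← hR w]
    have hcolsum : ∀ f : V → ℝ,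
        (∑ w, ∑ w', if 0 < c (w, w') then f w' else 0) = ∑ w', (C w' : ℝ) * f w' := by
      intro f
      rw [Finset.sum_comm]
      refine Finset.sum_congr rfl fun w' _ => ?_
      have hite : ∀ w, (if 0 < c (w, w') then f w' else 0)
          = (if 0 < c (w, w') then (1:ℝ) else 0) * f w' := by
        intro w; split_ifs <;> ring
      simp only [hite]
      rw [← Finset.sum_mul, ← hC w']
    have hindsum : (∑ w, ∑ w', if 0 < c (w, w') then (1:ℝ) else 0) = (n:ℝ) := by
      rw [hnR]
      exact Finset.sum_congr rfl fun w _ => (hR w).symm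
    -- value of the left-hand side
    have hZsum : ∑ w, ∑ w', (R w : ℝ) * (C w' : ℝ) / (n : ℝ) = (n:ℝ) := by
      have h1 : ∀ w, ∑ w', (R w : ℝ) * (C w' : ℝ) / (n : ℝ) = (R w : ℝ) := by
        intro w
        rw [← Finset.sum_div, ← Finset.mul_sum, ← hnC, mul_div_assoc, div_self hn0, mul_one]
      rw [Finset.sum_congr rfl fun w _ => h1 w]
      exact hnR.symm
    have hL : ∑ w, ∑ w', ((R w : ℝ) * (C w' : ℝ) / (n : ℝ) -
        (if 0 < c (w, w') then 1 + Real.log ((R w : ℝ) * (C w' : ℝ) / (n : ℝ)) else 0))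
        = (n:ℝ) - (n:ℝ) - ((∑ w, (R w:ℝ) * Real.log (R w))
            + (∑ w', (C w':ℝ) * Real.log (C w')) - (n:ℝ) * Real.log n) := by
      have hent : ∀ w w', (if 0 < c (w, w') then 1 + Real.log ((R w : ℝ) * (C w' : ℝ) / (n : ℝ)) else 0)
          = (if 0 < c (w, w') then (1:ℝ) else 0)
            + ((if 0 < c (w, w') then Real.log (R w) else 0)
              + (if 0 < c (w, w') then Real.log (C w') else 0)
              - (if 0 < c (w, w') then Real.log n else 0)) := by
        intro w w'
        by_cases h : 0 < c (w, w')
        · simp only [h, if_true]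
          rw [Real.log_div (mul_pos (hRpos w w' h) (hCpos w w' h)).ne' hn0,
            Real.log_mul (hRpos w w' h).ne' (hCpos w w' h).ne']
        · simp [h]
      simp only [Finset.sum_sub_distrib, hent, Finset.sum_add_distrib]
      rw [hZsum, hindsum, hrowsum (fun w => Real.log (R w)),
        hcolsum (fun w' => Real.log (C w')), hrowsum (fun _ => Real.log n)]
      have : ∑ w, (R w:ℝ) * Real.log n = (n:ℝ) * Real.log n := by
        rw [← Finset.sum_mul, ← hnR]
      rw [this]
      ring
    -- value of the right-hand side
    have huvsum : ∑ w, ∑ w', u w * v w' = S * T := by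
      rw [hS_def, hT_def, Finset.sum_mul]
      exact Finset.sum_congr rfl fun w _ => by rw [Finset.mul_sum]
    have hR2 : ∑ w, ∑ w', (u w * v w' -
        (if 0 < c (w, w') then 1 + Real.log (u w * v w') else 0))
        = S * T - (n:ℝ) - ((∑ w, (R w:ℝ) * Real.log (u w))
            + (∑ w', (C w':ℝ) * Real.log (v w'))) := by
      have hent : ∀ w w', (if 0 < c (w, w') then 1 + Real.log (u w * v w') else 0)
          = (if 0 < c (w, w') then (1:ℝ) else 0)
            + ((if 0 < c (w, w') then Real.log (u w) else 0)
              + (if 0 < c (w, w') then Real.log (v w') else 0)) := by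
        intro w w'
        by_cases h : 0 < c (w, w')
        · simp only [h, if_true]
          rw [Real.log_mul (hu' w w' h).ne' (hv' w w' h).ne']
        · simp [h]
      simp only [Finset.sum_sub_distrib, hent, Finset.sum_add_distrib]
      rw [huvsum, hindsum, hrowsum (fun w => Real.log (u w)),
        hcolsum (fun w' => Real.log (v w'))]
      ring
    rw [hL, hR2]
    -- the key marginal inequalities
    have hrowineq : (n:ℝ) * Real.log n - (n:ℝ) * Real.log S
        ≤ (∑ w, (R w:ℝ) * Real.log (R w)) - (∑ w, (R w:ℝ) * Real.log (u w)) := by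
      have hterm : ∀ w ∈ Finset.univ,
          (R w:ℝ) * (1 + (Real.log n - Real.log S)) - ((n:ℝ)/S) * u w
            ≤ (R w:ℝ) * Real.log (R w) - (R w:ℝ) * Real.log (u w) := by
        intro w _
        by_cases hRw : (R w : ℕ) = 0
        · have hnua : 0 ≤ ((n:ℝ)/S) * u w := mul_nonneg (div_nonneg hn'.le hSpos.le) (hu w)
          simp only [hRw, Nat.cast_zero, zero_mul]
          linarith
        · have ha : (0:ℝ) < (R w : ℝ) := by exact_mod_cast Nat.pos_of_ne_zero hRw
          obtain ⟨w', hw'⟩ := hRex w ha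
          have hb : 0 < u w := hu' w w' hw'
          have hx : (0:ℝ) < (n:ℝ) * u w / (S * (R w:ℝ)) := by positivity
          have hlog := Real.log_le_sub_one_of_pos hx
          rw [Real.log_div (mul_pos hn' hb).ne' (mul_pos hSpos ha).ne',
            Real.log_mul hn0 hb.ne', Real.log_mul hSpos.ne' ha.ne'] at hlog
          have hmul := mul_le_mul_of_nonneg_left hlog ha.le
          have hid : (R w:ℝ) * ((n:ℝ) * u w / (S * (R w:ℝ)) - 1)
              = ((n:ℝ)/S) * u w - (R w:ℝ) := by
            field_simp
          rw [hid] at hmul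
          nlinarith [hmul]
      have hsum := Finset.sum_le_sum hterm
      have hlhs : ∑ w, ((R w:ℝ) * (1 + (Real.log n - Real.log S)) - ((n:ℝ)/S) * u w)
          = (n:ℝ) * Real.log n - (n:ℝ) * Real.log S := by
        rw [Finset.sum_sub_distrib, ← Finset.sum_mul, ← hnR, ← Finset.mul_sum, ← hS_def,
          div_mul_cancel₀ _ hSpos.ne']
        ring
      rw [hlhs] at hsum
      calc (n:ℝ) * Real.log n - (n:ℝ) * Real.log S ≤ _ := hsum
        _ = _ := by rw [Finset.sum_sub_distrib]
    have hcolineq : (n:ℝ) * Real.log n - (n:ℝ) * Real.log T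
        ≤ (∑ w', (C w':ℝ) * Real.log (C w')) - (∑ w', (C w':ℝ) * Real.log (v w')) := by
      have hterm : ∀ w' ∈ Finset.univ,
          (C w':ℝ) * (1 + (Real.log n - Real.log T)) - ((n:ℝ)/T) * v w'
            ≤ (C w':ℝ) * Real.log (C w') - (C w':ℝ) * Real.log (v w') := by
        intro w' _
        by_cases hCw : (C w' : ℕ) = 0
        · have hnua : 0 ≤ ((n:ℝ)/T) * v w' := mul_nonneg (div_nonneg hn'.le hTpos.le) (hv w')
          simp only [hCw, Nat.cast_zero, zero_mul]
          linarith
        · have ha : (0:ℝ) < (C w' : ℝ) := by exact_mod_cast Nat.pos_of_ne_zero hCw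
          obtain ⟨w, hw⟩ := hCex w' ha
          have hb : 0 < v w' := hv' w w' hw
          have hx : (0:ℝ) < (n:ℝ) * v w' / (T * (C w':ℝ)) := by positivity
          have hlog := Real.log_le_sub_one_of_pos hx
          rw [Real.log_div (mul_pos hn' hb).ne' (mul_pos hTpos ha).ne',
            Real.log_mul hn0 hb.ne', Real.log_mul hTpos.ne' ha.ne'] at hlog
          have hmul := mul_le_mul_of_nonneg_left hlog ha.le
          have hid : (C w':ℝ) * ((n:ℝ) * v w' / (T * (C w':ℝ)) - 1)
              = ((n:ℝ)/T) * v w' - (C w':ℝ) := by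
            field_simp
          rw [hid] at hmul
          nlinarith [hmul]
      have hsum := Finset.sum_le_sum hterm
      have hlhs : ∑ w', ((C w':ℝ) * (1 + (Real.log n - Real.log T)) - ((n:ℝ)/T) * v w')
          = (n:ℝ) * Real.log n - (n:ℝ) * Real.log T := by
        rw [Finset.sum_sub_distrib, ← Finset.sum_mul, ← hnC, ← Finset.mul_sum, ← hT_def,
          div_mul_cancel₀ _ hTpos.ne']
        ring
      rw [hlhs] at hsum
      calc (n:ℝ) * Real.log n - (n:ℝ) * Real.log T ≤ _ := hsum
        _ = _ := by rw [Finset.sum_sub_distrib]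
    -- final tangent inequality
    have hfinal : (n:ℝ) * Real.log S + (n:ℝ) * Real.log T - (n:ℝ) * Real.log n
        ≤ S * T - (n:ℝ) := by
      have hx : (0:ℝ) < S * T / (n:ℝ) := by positivity
      have hlog := Real.log_le_sub_one_of_pos hx
      rw [Real.log_div (mul_pos hSpos hTpos).ne' hn0, Real.log_mul hSpos.ne' hTpos.ne'] at hlog
      have hmul := mul_le_mul_of_nonneg_left hlog hn'.le
      have hid : (n:ℝ) * (S * T / (n:ℝ) - 1) = S * T - (n:ℝ) := by field_simp
      rw [hid] at hmul
      nlinarith [hmul]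
    linarith
  · -- the infinite case: some support entry has u w * v w' = 0
    push_neg at hfin
    obtain ⟨w0, w0', hc0, hle⟩ := hfin
    have h0 : u w0 * v w0' = 0 :=
      le_antisymm hle (mul_nonneg (hu w0) (hv w0'))
    have htop : gKLterm (if 0 < c (w0, w0') then (1:ℝ) else 0) (u w0 * v w0') = ⊤ := by
      unfold gKLterm
      rw [if_pos hc0, if_neg one_ne_zero, if_pos h0]
    refine le_trans le_top ?_
    unfold gKL
    have hterm : ∀ w w', (0:EReal) ≤ gKLterm (if 0 < c (w, w') then (1:ℝ) else 0) (u w * v w') := by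
      intro w w'
      refine gKLterm_nonneg ?_ (mul_nonneg (hu w) (hv w'))
      split_ifs <;> simp
    calc (⊤ : EReal) = gKLterm (if 0 < c (w0, w0') then (1:ℝ) else 0) (u w0 * v w0') := htop.symm
      _ ≤ ∑ w', gKLterm (if 0 < c (w0, w') then (1:ℝ) else 0) (u w0 * v w') :=
          Finset.single_le_sum (fun i _ => hterm w0 i) (Finset.mem_univ w0')
      _ ≤ ∑ w, ∑ w', gKLterm (if 0 < c (w, w') then (1:ℝ) else 0) (u w * v w') :=
          Finset.single_le_sum (fun i _ => Finset.sum_nonneg fun j _ => hterm i j)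
            (Finset.mem_univ w0)

/-- For the zeroth-power (binary) count matrix `B(w,w') = 1[c(w,w') > 0]`,
the matrix `Z(w,w') = N₊(w,·)·N₊(·,w')/N₊(·,·)` globally minimizes
`gKL(B ‖ u vᵀ)` over nonnegative rank-one matrices, and normalizing it by the
column sums yields, for every context `w'` with `N₊(·,w') > 0`, the
Kneser–Ney continuation distribution `P^alt(w) = N₊(w,·)/N₊(·,·)`,
independently of `w'`. -/
theorem rank_one_gKL_of_binary_gives_kneser_ney {V : Type*} [Fintype V] [Nonempty V]
    (c : V × V → ℕ) (hB : ∃ p : V × V, 0 < c p) :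
    (∀ u v : V → ℝ, (∀ w, 0 ≤ u w) → (∀ w', 0 ≤ v w') →
      gKL (fun w w' => if 0 < c (w, w') then (1 : ℝ) else 0)
          (fun w w' =>
            ((Finset.univ.filter (fun x' : V => 0 < c (w, x'))).card : ℝ)
              * ((Finset.univ.filter (fun x : V => 0 < c (x, w'))).card : ℝ)
              / ((Finset.univ.filter (fun p : V × V => 0 < c p)).card : ℝ))
        ≤ gKL (fun w w' => if 0 < c (w, w') then (1 : ℝ) else 0)
            (fun w w' => u w * v w'))
    ∧ (∀ w' : V, 0 < (Finset.univ.filter (fun x : V => 0 < c (x, w'))).card →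
        ∀ w : V,
          (((Finset.univ.filter (fun x' : V => 0 < c (w, x'))).card : ℝ)
              * ((Finset.univ.filter (fun x : V => 0 < c (x, w'))).card : ℝ)
              / ((Finset.univ.filter (fun p : V × V => 0 < c p)).card : ℝ))
            / (∑ u : V, if 0 < c (u, w') then (1 : ℝ) else 0)
          = ((Finset.univ.filter (fun x' : V => 0 < c (w, x'))).card : ℝ)
              / ((Finset.univ.filter (fun p : V × V => 0 < c p)).card : ℝ)) := by
  classical
  have hR : ∀ w : V, (((Finset.univ.filter (fun x' : V => 0 < c (w, x'))).card : ℕ) : ℝ)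
      = ∑ w', if 0 < c (w, w') then (1:ℝ) else 0 := by
    intro w
    rw [Finset.card_filter]
    push_cast
    rfl
  have hC : ∀ w' : V, (((Finset.univ.filter (fun x : V => 0 < c (x, w'))).card : ℕ) : ℝ)
      = ∑ w, if 0 < c (w, w') then (1:ℝ) else 0 := by
    intro w'
    rw [Finset.card_filter]
    push_cast
    rfl
  have hnR : (((Finset.univ.filter (fun p : V × V => 0 < c p)).card : ℕ) : ℝ)
      = ∑ w : V, (((Finset.univ.filter (fun x' : V => 0 < c (w, x'))).card : ℕ) : ℝ) := by
    have : (Finset.univ.filter (fun p : V × V => 0 < c p)).card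
        = ∑ w : V, (Finset.univ.filter (fun x' : V => 0 < c (w, x'))).card := by
      rw [Finset.card_filter, Fintype.sum_prod_type]
      exact Finset.sum_congr rfl fun w _ => (Finset.card_filter _ _).symm
    rw [this]; push_cast; rfl
  have hnC : (((Finset.univ.filter (fun p : V × V => 0 < c p)).card : ℕ) : ℝ)
      = ∑ w' : V, (((Finset.univ.filter (fun x : V => 0 < c (x, w'))).card : ℕ) : ℝ) := by
    have : (Finset.univ.filter (fun p : V × V => 0 < c p)).card
        = ∑ w' : V, (Finset.univ.filter (fun x : V => 0 < c (x, w'))).card := by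
      rw [Finset.card_filter, Fintype.sum_prod_type, Finset.sum_comm]
      exact Finset.sum_congr rfl fun w _ => (Finset.card_filter _ _).symm
    rw [this]; push_cast; rfl
  have hn : 0 < (Finset.univ.filter (fun p : V × V => 0 < c p)).card := by
    obtain ⟨p, hp⟩ := hB
    exact Finset.card_pos.2 ⟨p, Finset.mem_filter.2 ⟨Finset.mem_univ p, hp⟩⟩
  constructor
  · intro u v hu hv
    exact main_ineq c _ _ _ hR hC hnR hnC hn u v hu hv
  · intro w' hw' w
    have hCw : (0:ℝ) < ((Finset.univ.filter (fun x : V => 0 < c (x, w'))).card : ℝ) := by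
      exact_mod_cast hw'
    have hn' : (0:ℝ) < ((Finset.univ.filter (fun p : V × V => 0 < c p)).card : ℝ) := by
      exact_mod_cast hn
    rw [← hC w']
    field_simp
end

section
/- Let 1 = ρ_0 ≥ ρ_1 ≥ ⋯ ≥ ρ_η ≥ ρ_{η+1} = 0 with ρ_{η+1} = 0 and 0 ≤ d* ≤ 1. Fix a context w' with c(w') := ∑_w c(w,w') > 0 (hence S_{ρ_j}(w') > 0 for all j), and assume N_+(·,·) > 0, with γ_j(w') := d*·S_{ρ_{j+1}}(w')/S_{ρ_j}(w') and P^alt(w) := N_+(w,·)/N_+(·,·). Suppose Z_1, …, Z_η are nonnegative matrices such that for every j and for this context w', ∑_w Z_j(w,w') = S_{ρ_j}(w') − d*·S_{ρ_{j+1}}(w') (i.e., each low-rank approximation preserves the per-context column sums of the discounted powered counts). Then the PLRE model is properly normalized: ∑_w [ (c(w,w') − d*·c(w,w')^{ρ_1})/S_1(w') + ∑_{j=1}^{η} (∏_{h=0}^{j−1} γ_h(w')) · Z_j(w,w')/S_{ρ_j}(w') + (∏_{h=0}^{η} γ_h(w')) · P^alt(w) ] = 1. -/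
open Finset

/-- Powered count with the convention `0 ^ ρ = 0` (in particular `0 ^ 0 = 0`,
so `pcount n 0` is the indicator that `n > 0`). -/
noncomputable def pcount (n : ℕ) (ρ : ℝ) : ℝ := if n = 0 then 0 else (n : ℝ) ^ ρ

lemma pcount_nonneg (n : ℕ) (ρ : ℝ) : 0 ≤ pcount n ρ := by
  unfold pcount
  split
  · exact le_refl 0
  · exact Real.rpow_nonneg (Nat.cast_nonneg n) ρ

lemma pcount_pos {n : ℕ} (hn : 0 < n) (ρ : ℝ) : 0 < pcount n ρ := by
  unfold pcount
  rw [if_neg hn.ne']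
  exact Real.rpow_pos_of_pos (by exact_mod_cast hn) ρ

lemma pcount_one (n : ℕ) : pcount n 1 = n := by
  unfold pcount
  split
  · simp [*]
  · exact Real.rpow_one _

/-- Proper normalization of the PLRE model: if each low rank matrix `Zⱼ`
preserves the per-context column sums of the discounted powered counts, then
for a fixed context `w'` the PLRE smoothed conditional probabilities sum to
one over words `w`. -/
theorem plre_normalized {V : Type*} [Fintype V] [Nonempty V]
    (c : V × V → ℕ) (η : ℕ) (ρ : ℕ → ℝ) (hρ0 : ρ 0 = 1)
    (hchain : ∀ j ≤ η, ρ (j + 1) ≤ ρ j) (hlast : ρ (η + 1) = 0)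
    (dstar : ℝ) (hd0 : 0 ≤ dstar) (hd1 : dstar ≤ 1)
    (w' : V) (hc : 0 < ∑ w, c (w, w'))
    (hN : 0 < (Finset.univ.filter (fun p : V × V => 0 < c p)).card)
    (Z : ℕ → V → V → ℝ)
    (hZnn : ∀ j ∈ Finset.Icc 1 η, ∀ w w'' : V, 0 ≤ Z j w w'')
    (hZcol : ∀ j ∈ Finset.Icc 1 η,
      ∑ w, Z j w w'
        = (∑ u, pcount (c (u, w')) (ρ j))
          - dstar * (∑ u, pcount (c (u, w')) (ρ (j + 1)))) :
    ∑ w : V,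
      ( ((c (w, w') : ℝ) - dstar * pcount (c (w, w')) (ρ 1)) / (∑ u, (c (u, w') : ℝ))
        + (∑ j ∈ Finset.Icc 1 η,
            (∏ h ∈ Finset.range j,
              dstar * (∑ u, pcount (c (u, w')) (ρ (h + 1)))
                / (∑ u, pcount (c (u, w')) (ρ h)))
            * (Z j w w' / (∑ u, pcount (c (u, w')) (ρ j))))
        + (∏ h ∈ Finset.range (η + 1),
            dstar * (∑ u, pcount (c (u, w')) (ρ (h + 1)))
              / (∑ u, pcount (c (u, w')) (ρ h)))
            * (((Finset.univ.filter (fun x' : V => 0 < c (w, x'))).card : ℝ)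
                / ((Finset.univ.filter (fun p : V × V => 0 < c p)).card : ℝ)) )
      = 1 := by
  -- abbreviations
  set S : ℕ → ℝ := fun j => ∑ u, pcount (c (u, w')) (ρ j) with hS
  set P : ℕ → ℝ := fun j => ∏ h ∈ Finset.range j,
      dstar * S (h + 1) / S h with hP
  -- a positive count exists
  obtain ⟨u₀, -, hu₀⟩ : ∃ u ∈ Finset.univ, 0 < c (u, w') := by
    by_contra h
    push_neg at h
    have : ∑ w, c (w, w') = 0 :=
      Finset.sum_eq_zero fun w _ => Nat.le_zero.mp (h w (mem_univ w))
    omega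
  have hSpos : ∀ j, 0 < S j := fun j =>
    Finset.sum_pos' (fun u _ => pcount_nonneg _ _)
      ⟨u₀, mem_univ u₀, pcount_pos hu₀ _⟩
  -- S 0 equals the raw count sum
  have hT : (∑ u, (c (u, w') : ℝ)) = S 0 := by
    simp only [hS, hρ0, pcount_one]
  have hTpos : (0:ℝ) < ∑ u, (c (u, w') : ℝ) := by
    rw [hT]; exact hSpos 0
  -- split the big sum
  rw [Finset.sum_add_distrib, Finset.sum_add_distrib]
  -- first term
  have h1 : ∑ w : V, ((c (w, w') : ℝ) - dstar * pcount (c (w, w')) (ρ 1))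
      / (∑ u, (c (u, w') : ℝ)) = 1 - P 1 := by
    rw [← Finset.sum_div, Finset.sum_sub_distrib, ← Finset.mul_sum]
    have e1 : (∑ w, (c (w, w') : ℝ)) = S 0 := hT
    have e2 : (∑ w : V, pcount (c (w, w')) (ρ 1)) = S 1 := rfl
    rw [e1, e2, sub_div, div_self (hSpos 0).ne']
    simp [hP, Finset.prod_range_one, mul_div_assoc]
  -- middle term
  have h2 : ∑ w : V, (∑ j ∈ Finset.Icc 1 η,
      P j * (Z j w w' / S j)) = P 1 - P (η + 1) := by
    rw [Finset.sum_comm]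
    have step : ∀ j ∈ Finset.Icc 1 η,
        (∑ w : V, P j * (Z j w w' / S j)) = P j - P (j + 1) := by
      intro j hj
      rw [← Finset.mul_sum, ← Finset.sum_div, hZcol j hj]
      have hPsucc : P (j + 1) = P j * (dstar * S (j + 1) / S j) := by
        simp only [hP, Finset.prod_range_succ]
      have e1 : (∑ u : V, pcount (c (u, w')) (ρ j)) = S j := rfl
      have e2 : (∑ u : V, pcount (c (u, w')) (ρ (j + 1))) = S (j + 1) := rfl
      rw [e1, e2, sub_div, div_self (hSpos j).ne', hPsucc, mul_sub, mul_one,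
        mul_div_assoc]
    rw [Finset.sum_congr rfl step]
    -- telescoping
    have : ∀ n : ℕ, ∑ j ∈ Finset.Icc 1 n, (P j - P (j + 1)) = P 1 - P (n + 1) := by
      intro n
      induction n with
      | zero => simp
      | succ n ih =>
        rw [Finset.sum_Icc_succ_top (by omega : 1 ≤ n + 1), ih]
        ring
    exact this η
  -- last term
  have hcount : ∑ w : V,
      ((Finset.univ.filter (fun x' : V => 0 < c (w, x'))).card : ℝ)
      = ((Finset.univ.filter (fun p : V × V => 0 < c p)).card : ℝ) := by
    push_cast
    rw [← Nat.cast_sum]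
    congr 1
    simp only [Finset.card_filter]
    rw [Fintype.sum_prod_type]
  have h3 : ∑ w : V, P (η + 1) *
      (((Finset.univ.filter (fun x' : V => 0 < c (w, x'))).card : ℝ)
        / ((Finset.univ.filter (fun p : V × V => 0 < c p)).card : ℝ))
      = P (η + 1) := by
    rw [← Finset.mul_sum, ← Finset.sum_div, hcount,
      div_self (by exact_mod_cast hN.ne')]
    ring
  rw [h1, h2, h3]
  ring
end
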